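/- arXiv:1604.05214 — 3 statements merged into one kernel-verified Lean document; each statement's English description precedes it below -/
import Mathlib

section
/- Let (X₁,Y₁), (X₂,Y₂) be i.i.d. random vectors with generic (X,Y) bivariate Sarmanov, F ∈ 𝒟 and G̅(x) = o(F̅(x)). Denote H̅(x) = P[XY > x] and H̃(v) = sup_{x>0} H̅(x/v)/H̅(x). If ∫₀^∞ H̃(v) G(dv) < ∞, then P[X₁Y₁ > x, X₂Y₂Y₁ > x] = o(P[X₁Y₁ > x]) as x → ∞. -/
/-!
Conditioning on `(X₁, Y₁)` and using independence, the joint tail equals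
`E[H̄(x / Y₁); X₁Y₁ > x]`, and `H̄(x / v) ≤ H̃(v) H̄(x)`, so it is at most
`H̄(x) · E[H̃(Y₁); X₁Y₁ > x]`. The last expectation tends to `0` because `H̃(Y₁)` is
integrable and `P[X₁Y₁ > x] → 0`. Since `H̄` is antitone, `H̃` is monotone on `(0, ∞)`,
which provides the measurability needed to transport `∫ H̃ dG` to `Ω`.
-/

open MeasureTheory Set Filter ProbabilityTheory
open scoped ENNReal Topology

-- `sSup (ratioSet H̄ v)` is the paper's `H̃(v)`.
def ratioSet (T : ℝ → ℝ) (v : ℝ) : Set ℝ :=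
  {r | ∃ x : ℝ, 0 < x ∧ r = T (x / v) / T x}

lemma le_sSup_ratioSet_mul {T : ℝ → ℝ} {v x : ℝ} (hbdd : BddAbove (ratioSet T v))
    (hx : 0 < x) (hTx : 0 < T x) : T (x / v) ≤ sSup (ratioSet T v) * T x :=
  (div_le_iff₀ hTx).1 (le_csSup hbdd ⟨x, hx, rfl⟩)

lemma le_ofReal_sSup_ratioSet_mul {T : ℝ → ℝ≥0∞} (hT : ∀ t, T t ≠ ⊤) {v x : ℝ}
    (hbdd : BddAbove (ratioSet (fun t => (T t).toReal) v)) (hx : 0 < x) (hTx : T x ≠ 0) :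
    T (x / v) ≤ ENNReal.ofReal (sSup (ratioSet (fun t => (T t).toReal) v)) * T x := by
  have h := le_sSup_ratioSet_mul hbdd hx (ENNReal.toReal_pos hTx (hT x))
  rw [← ENNReal.ofReal_toReal (hT (x / v)), ← ENNReal.ofReal_toReal (hT x),
    ← ENNReal.ofReal_mul' ENNReal.toReal_nonneg]
  exact ENNReal.ofReal_le_ofReal h

lemma monotoneOn_sSup_ratioSet {T : ℝ → ℝ} (hT : Antitone T) (hT₀ : ∀ x, 0 ≤ T x)
    (hbdd : ∀ v, 0 < v → BddAbove (ratioSet T v)) :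
    MonotoneOn (fun v => sSup (ratioSet T v)) (Ioi 0) := by
  intro v hv w hw hvw
  refine csSup_le ⟨_, 1, one_pos, rfl⟩ ?_
  rintro _ ⟨x, hx, rfl⟩
  refine le_trans ?_ (le_csSup (hbdd w hw) ⟨x, hx, rfl⟩)
  exact div_le_div_of_nonneg_right (hT (div_le_div_of_nonneg_left hx.le hv hvw)) (hT₀ x)

lemma isLittleO_toReal_of_le_mul {ι : Type*} {l : Filter ι} {f g h : ι → ℝ≥0∞}
    (hfgh : ∀ᶠ i in l, f i ≤ g i * h i) (hg : Tendsto g l (𝓝 0))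
    (hh : ∀ᶠ i in l, h i ≠ ⊤) :
    (fun i => (f i).toReal) =o[l] fun i => (h i).toReal := by
  rw [Asymptotics.isLittleO_iff]
  intro c hc
  filter_upwards [hfgh, ENNReal.tendsto_nhds_zero.1 hg _ (ENNReal.ofReal_pos.2 hc), hh]
    with i hfi hgi hhi
  rw [Real.norm_of_nonneg ENNReal.toReal_nonneg, Real.norm_of_nonneg ENNReal.toReal_nonneg]
  calc (f i).toReal ≤ (ENNReal.ofReal c * h i).toReal :=
        ENNReal.toReal_mono (ENNReal.mul_ne_top ENNReal.ofReal_ne_top hhi)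
          (hfi.trans (mul_le_mul_left hgi _))
    _ = c * (h i).toReal := by rw [ENNReal.toReal_mul, ENNReal.toReal_ofReal hc.le]

section Probability

variable {Ω : Type*} [MeasurableSpace Ω] {P : Measure Ω}

lemma lintegral_comp_eq_lintegral_map_of_monotoneOn {V : Ω → ℝ} (hV : Measurable V)
    (hV₀ : ∀ ω, 0 < V ω) {f : ℝ → ℝ≥0∞} (hf : MonotoneOn f (Ioi 0)) :
    ∫⁻ ω, f (V ω) ∂P = ∫⁻ v, f v ∂(P.map V) := by
  have hV₀' : ∀ᵐ v ∂(P.map V), v ∈ Ioi 0 :=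
    (ae_map_iff hV.aemeasurable measurableSet_Ioi).2 (Eventually.of_forall hV₀)
  have hf' := aemeasurable_restrict_of_monotoneOn (μ := P.map V) measurableSet_Ioi hf
  rw [Measure.restrict_eq_self_of_ae_mem hV₀'] at hf'
  exact (lintegral_map' hf' hV.aemeasurable).symm

variable [IsFiniteMeasure P]

lemma tendsto_measure_lt_atTop_zero {Z : Ω → ℝ} (hZ : Measurable Z) :
    Tendsto (fun t => P {ω | t < Z ω}) atTop (𝓝 0) := by
  have h := tendsto_measure_iInter_atTop (μ := P) (s := fun t : ℝ => {ω | t < Z ω})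
    (fun t => (measurableSet_lt measurable_const hZ).nullMeasurableSet)
    (fun s t hst ω hω => hst.trans_lt hω) ⟨0, measure_ne_top P _⟩
  have hempty : (⋂ t : ℝ, {ω | t < Z ω}) = ∅ :=
    eq_empty_of_forall_notMem fun ω hω => lt_irrefl (Z ω) (mem_iInter.1 hω (Z ω))
  rwa [hempty, measure_empty] at h

lemma ProbabilityTheory.IndepFun.measure_mem_eq_lintegral {α β : Type*} [MeasurableSpace α]
    [MeasurableSpace β] {Z : Ω → α} {W : Ω → β} (hZ : Measurable Z) (hW : Measurable W)
    (h : IndepFun Z W P) {S : Set (α × β)} (hS : MeasurableSet S) :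
    P {ω | (Z ω, W ω) ∈ S} = ∫⁻ ω, P {ω' | (Z ω, W ω') ∈ S} ∂P := by
  have hmap := (indepFun_iff_map_prod_eq_prod_map_map hZ.aemeasurable hW.aemeasurable).1 h
  calc P {ω | (Z ω, W ω) ∈ S} = P.map (fun ω => (Z ω, W ω)) S :=
        (Measure.map_apply (hZ.prodMk hW) hS).symm
    _ = ∫⁻ a, P.map W (Prod.mk a ⁻¹' S) ∂(P.map Z) := by rw [hmap, Measure.prod_apply hS]
    _ = ∫⁻ ω, P {ω' | (Z ω, W ω') ∈ S} ∂P := by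
        rw [lintegral_map (measurable_measure_prodMk_left hS) hZ]
        simp_rw [Measure.map_apply hW (measurable_prodMk_left hS)]
        rfl

section Product

variable {Z V W : Ω → ℝ} (hZ : Measurable Z) (hV : Measurable V) (hW : Measurable W)
  (hV₀ : ∀ ω, 0 < V ω) (h : IndepFun (fun ω => (Z ω, V ω)) W P)
include hZ hV hW hV₀ h

lemma measure_lt_and_lt_mul_eq_setLIntegral (x : ℝ) :
    P {ω | x < Z ω ∧ x < W ω * V ω} =
      ∫⁻ ω in {ω | x < Z ω}, P {ω' | x / V ω < W ω'} ∂P := by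
  have hS : MeasurableSet {p : (ℝ × ℝ) × ℝ | x < p.1.1 ∧ x < p.2 * p.1.2} :=
    (measurableSet_lt measurable_const measurable_fst.fst).inter
      (measurableSet_lt measurable_const (measurable_snd.mul measurable_fst.snd))
  rw [← lintegral_indicator (measurableSet_lt measurable_const hZ)]
  refine (h.measure_mem_eq_lintegral (hZ.prodMk hV) hW hS).trans (lintegral_congr fun ω => ?_)
  by_cases hxZ : x < Z ω
  · simp only [indicator_of_mem (show ω ∈ {ω | x < Z ω} from hxZ), mem_ofPred, hxZ, true_and,
      div_lt_iff₀ (hV₀ ω)]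
  · simp [hxZ]

lemma measure_lt_and_lt_mul_le_setLIntegral_mul
    (hWZ : ∀ t, P {ω | t < W ω} = P {ω | t < Z ω}) {Φ : ℝ → ℝ≥0∞} {x : ℝ}
    (hΦ : P {ω | x < Z ω} ≠ 0 → ∀ v, 0 < v →
      P {ω | x / v < Z ω} ≤ Φ v * P {ω | x < Z ω}) :
    P {ω | x < Z ω ∧ x < W ω * V ω} ≤
      (∫⁻ ω in {ω | x < Z ω}, Φ (V ω) ∂P) * P {ω | x < Z ω} := by
  rcases eq_or_ne (P {ω | x < Z ω}) 0 with h0 | h0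
  · exact ((measure_mono fun ω hω => hω.1).trans_eq h0).trans zero_le
  rw [measure_lt_and_lt_mul_eq_setLIntegral hZ hV hW hV₀ h,
    ← lintegral_mul_const' _ _ (measure_ne_top P _)]
  exact lintegral_mono fun ω => (hWZ _).trans_le (hΦ h0 _ (hV₀ ω))

end Product

end Probability

theorem joint_tail_negligible_general
    {Ω : Type*} [MeasurableSpace Ω] (P : Measure Ω) [IsProbabilityMeasure P]
    (X₁ Y₁ X₂ Y₂ : Ω → ℝ)
    (hX₁ : Measurable X₁) (hY₁ : Measurable Y₁)
    (hX₂ : Measurable X₂) (hY₂ : Measurable Y₂)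
    (hY₁pos : ∀ ω, 0 < Y₁ ω)
    -- the two pairs are i.i.d.
    (hid : P.map (fun ω => (X₂ ω, Y₂ ω)) = P.map (fun ω => (X₁ ω, Y₁ ω)))
    (hindep : ProbabilityTheory.IndepFun
      (fun ω => (X₁ ω, Y₁ ω)) (fun ω => (X₂ ω, Y₂ ω)) P)
    -- H̃(v) = sup_{x>0} H̄(x/v)/H̄(x) is well defined with ∫ H̃ dG < ∞
    (Htilde : ℝ → ℝ)
    (hHt : ∀ v : ℝ, 0 < v → Htilde v =
      sSup {r : ℝ | ∃ x : ℝ, 0 < x ∧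
        r = (P {ω | X₁ ω * Y₁ ω > x / v}).toReal / (P {ω | X₁ ω * Y₁ ω > x}).toReal})
    (hHtBdd : ∀ v : ℝ, 0 < v → BddAbove {r : ℝ | ∃ x : ℝ, 0 < x ∧
        r = (P {ω | X₁ ω * Y₁ ω > x / v}).toReal / (P {ω | X₁ ω * Y₁ ω > x}).toReal})
    (hHtInt : ∫⁻ v, ENNReal.ofReal (Htilde v) ∂(P.map Y₁) < ⊤) :
    (fun x => (P {ω | X₁ ω * Y₁ ω > x ∧ X₂ ω * Y₂ ω * Y₁ ω > x}).toReal) =o[atTop]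
      fun x => (P {ω | X₁ ω * Y₁ ω > x}).toReal := by
  set Hbar : ℝ → ℝ≥0∞ := fun t => P {ω | t < X₁ ω * Y₁ ω}
  have hHtilde : ∀ v, 0 < v → Htilde v = sSup (ratioSet (fun t => (Hbar t).toReal) v) := hHt
  have hmul : Measurable fun p : ℝ × ℝ => p.1 * p.2 := measurable_fst.mul measurable_snd
  have hsame : ∀ t, P {ω | t < X₂ ω * Y₂ ω} = Hbar t := fun t =>
    ((IdentDistrib.mk (hX₂.prodMk hY₂).aemeasurable (hX₁.prodMk hY₁).aemeasurable hid).comp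
      hmul).measure_mem_eq measurableSet_Ioi
  have hbound : ∀ x, 0 < x → P {ω | x < X₁ ω * Y₁ ω ∧ x < X₂ ω * Y₂ ω * Y₁ ω} ≤
      (∫⁻ ω in {ω | x < X₁ ω * Y₁ ω}, ENNReal.ofReal (Htilde (Y₁ ω)) ∂P) * Hbar x :=
    fun x hx => measure_lt_and_lt_mul_le_setLIntegral_mul (Z := fun ω => X₁ ω * Y₁ ω)
      (W := fun ω => X₂ ω * Y₂ ω) (Φ := fun v => ENNReal.ofReal (Htilde v)) (x := x)
      (hX₁.mul hY₁) hY₁ (hX₂.mul hY₂) hY₁pos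
      (hindep.comp (hmul.prodMk measurable_snd) hmul) hsame fun h0 v hv => by
        rw [hHtilde v hv]
        exact le_ofReal_sSup_ratioSet_mul (fun t => measure_ne_top P _) (hHtBdd v hv) hx h0
  have hHtMono : MonotoneOn (fun v => ENNReal.ofReal (Htilde v)) (Ioi 0) :=
    fun v hv w hw hvw => ENNReal.ofReal_le_ofReal <| by
      rw [hHtilde v hv, hHtilde w hw]
      exact monotoneOn_sSup_ratioSet (T := fun t => (Hbar t).toReal)
        (fun s t hst => ENNReal.toReal_mono (measure_ne_top P _)
          (measure_mono fun ω hω => hst.trans_lt hω))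
        (fun _ => ENNReal.toReal_nonneg) hHtBdd hv hw hvw
  have hint : ∫⁻ ω, ENNReal.ofReal (Htilde (Y₁ ω)) ∂P ≠ ⊤ := by
    rw [lintegral_comp_eq_lintegral_map_of_monotoneOn hY₁ hY₁pos hHtMono]
    exact hHtInt.ne
  exact isLittleO_toReal_of_le_mul ((eventually_gt_atTop 0).mono hbound)
    (tendsto_setLIntegral_zero (s := fun x => {ω | x < X₁ ω * Y₁ ω}) hint
      (tendsto_measure_lt_atTop_zero (hX₁.mul hY₁)))
    (Eventually.of_forall fun _ => measure_ne_top P _)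

/-- For i.i.d. bivariate Sarmanov vectors `(X₁,Y₁), (X₂,Y₂)` with `F ∈ 𝒟`,
`Ḡ = o(F̄)` and `∫ H̃ dG < ∞`, the joint tail
`P[X₁Y₁ > x, X₂Y₂Y₁ > x]` is `o(P[X₁Y₁ > x])`. -/
theorem joint_tail_negligible
    {Ω : Type*} [MeasurableSpace Ω] (P : Measure Ω) [IsProbabilityMeasure P]
    (X₁ Y₁ X₂ Y₂ : Ω → ℝ)
    (hX₁ : Measurable X₁) (hY₁ : Measurable Y₁)
    (hX₂ : Measurable X₂) (hY₂ : Measurable Y₂)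
    (hY₁pos : ∀ ω, 0 < Y₁ ω) (hY₂pos : ∀ ω, 0 < Y₂ ω)
    (φ₁ φ₂ : ℝ → ℝ) (hφ₁ : Measurable φ₁) (hφ₂ : Measurable φ₂) (θ b₁ b₂ : ℝ)
    (hb₁ : ∀ x, |φ₁ x| ≤ b₁) (hb₂ : ∀ y, |φ₂ y| ≤ b₂)
    (hmean1 : ∫ ω, φ₁ (X₁ ω) ∂P = 0) (hmean2 : ∫ ω, φ₂ (Y₁ ω) ∂P = 0)
    -- generic Sarmanov joint law of each pair
    (hjoint1 : P.map (fun ω => (X₁ ω, Y₁ ω)) =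
      ((P.map X₁).prod (P.map Y₁)).withDensity
        (fun p => ENNReal.ofReal (1 + θ * φ₁ p.1 * φ₂ p.2)))
    -- the two pairs are i.i.d.
    (hid : P.map (fun ω => (X₂ ω, Y₂ ω)) = P.map (fun ω => (X₁ ω, Y₁ ω)))
    (hindep : ProbabilityTheory.IndepFun
      (fun ω => (X₁ ω, Y₁ ω)) (fun ω => (X₂ ω, Y₂ ω)) P)
    -- F ∈ 𝒟
    (hD : ∀ y : ℝ, 0 < y → y < 1 →
      ∃ C : ℝ, ∀ᶠ x in atTop,
        (P {ω | X₁ ω > x * y}).toReal ≤ C * (P {ω | X₁ ω > x}).toReal)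
    -- Ḡ = o(F̄)
    (hGF : (fun x => (P {ω | Y₁ ω > x}).toReal) =o[atTop]
      fun x => (P {ω | X₁ ω > x}).toReal)
    -- H̃(v) = sup_{x>0} H̄(x/v)/H̄(x) is well defined with ∫ H̃ dG < ∞
    (Htilde : ℝ → ℝ)
    (hHt : ∀ v : ℝ, 0 < v → Htilde v =
      sSup {r : ℝ | ∃ x : ℝ, 0 < x ∧
        r = (P {ω | X₁ ω * Y₁ ω > x / v}).toReal / (P {ω | X₁ ω * Y₁ ω > x}).toReal})
    (hHtBdd : ∀ v : ℝ, 0 < v → BddAbove {r : ℝ | ∃ x : ℝ, 0 < x ∧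
        r = (P {ω | X₁ ω * Y₁ ω > x / v}).toReal / (P {ω | X₁ ω * Y₁ ω > x}).toReal})
    (hHtInt : ∫⁻ v, ENNReal.ofReal (Htilde v) ∂(P.map Y₁) < ⊤) :
    (fun x => (P {ω | X₁ ω * Y₁ ω > x ∧ X₂ ω * Y₂ ω * Y₁ ω > x}).toReal) =o[atTop]
      fun x => (P {ω | X₁ ω * Y₁ ω > x}).toReal :=
  joint_tail_negligible_general P X₁ Y₁ X₂ Y₂ hX₁ hY₁ hX₂ hY₂ hY₁pos hid hindep Htilde hHt hHtBdd
    hHtInt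
end

section
/- Let {(Xᵢ,Yᵢ)} be i.i.d. bivariate Sarmanov vectors with lim φ₁ = d₁, X ≥ 0, F ∈ 𝒟, G̅(x) = o(F̅(x)), ∫H̃(v)G(dv) < ∞ where H̃(v) = sup_{x>0} P[XY > x/v]/P[XY > x], E[Y^{α+ε}] < ∞ for some ε > 0, and suppose P[XY > x] ≤ W(x) for all x > 0 where W is a bounded regularly varying function with index −α. Then for all 1 ≤ s < t ≤ n, P[X_s∏_{i=1}^s Yᵢ > x, X_t∏_{i=1}^t Yᵢ > x] = o(W(x)) as x → ∞. -/
/-!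
Split the second product as `X_t Y_1 ⋯ Y_t = Π · R` with `Π = Y_1 ⋯ Y_s` and
`R = X_t Y_{s+1} ⋯ Y_t`, so that `R` is independent of `(X_s, Π)`. The function `h = H̃`
satisfies `P[XY > x/v] ≤ h(v) P[XY > x]` and is submultiplicative, so for independent positive
factors `E h(Y_{i₁} ⋯ Y_{iₖ}) ≤ (E h(Y))^k < ∞`; in particular `P[R > x/v] ≤ J h(v) P[XY > x]`
with `J = E h(Y_{s+1} ⋯ Y_{t-1})`. On `{Π ≤ n}` the joint event forces `X_s > x/n` and
`R > x/n`, of probability at most `P[X > x/n] J h(n) P[XY > x]`; on `{Π > n}` it has probability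
at most `J E[h(Π); Π > n] P[XY > x]`. Taking first `n`, then `x` large gives
`o(P[XY > x]) = o(W(x))`.

If instead `P[XY > x₀] = 0` for some `x₀ > 0`, then `H̃` carries no information. The Sarmanov
density then vanishes on `(x₀/c, ∞) × (c, ∞)`; since `∫ φ₂ dG = 0` and `Y > 0`, for small `c`
this forces `F̄(x₀/c) = 0`. So `X` is bounded, hence so is `Y` because `Ḡ = o(F̄)`, and the joint
event is eventually null.
-/

open MeasureTheory ProbabilityTheory Set Filter
open scoped ENNReal Topology

lemma isLittleO_toReal_of_forall_eventually_le_mul {α : Type*} {l : Filter α}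
    {f g : α → ℝ≥0∞} (hg : ∀ x, g x ≠ ∞)
    (h : ∀ ε : ℝ≥0∞, 0 < ε → ∀ᶠ x in l, f x ≤ ε * g x) :
    (fun x => (f x).toReal) =o[l] fun x => (g x).toReal := by
  refine Asymptotics.isLittleO_iff.2 fun c hc => ?_
  filter_upwards [h (ENNReal.ofReal c) (ENNReal.ofReal_pos.2 hc)] with x hx
  have := ENNReal.toReal_mono (ENNReal.mul_ne_top ENNReal.ofReal_ne_top (hg x)) hx
  rw [ENNReal.toReal_mul, ENNReal.toReal_ofReal hc.le] at this
  simpa [abs_of_nonneg] using this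

lemma Finset.prod_Icc_one_mul_prod_Ioc {M : Type*} [CommMonoid M] (f : ℕ → M) {s n : ℕ}
    (hsn : s ≤ n) : (∏ i ∈ Finset.Icc 1 s, f i) * ∏ i ∈ Finset.Ioc s n, f i =
      ∏ i ∈ Finset.Icc 1 n, f i := by
  have hIcc : ∀ k, Finset.Icc 1 k = Finset.Ioc 0 k := Finset.Icc_add_one_left_eq_Ioc 0
  rw [hIcc, hIcc, Finset.prod_Ioc_consecutive _ (Nat.zero_le s) hsn]

section ProductTails

variable {Ω : Type*} [MeasurableSpace Ω] {P : Measure Ω}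

lemma tendsto_measure_lt_atTop [IsFiniteMeasure P] {f : Ω → ℝ} (hf : Measurable f) :
    Tendsto (fun y => P {ω | y < f ω}) atTop (𝓝 0) := by
  have hanti : Antitone fun y : ℝ => {ω | y < f ω} :=
    fun a b hab ω hω => lt_of_le_of_lt hab hω
  have hempty : ⋂ y : ℝ, {ω | y < f ω} = ∅ :=
    eq_empty_of_forall_notMem fun ω hω => lt_irrefl (f ω) (mem_iInter.1 hω (f ω))
  have := tendsto_measure_iInter_atTop
    (fun y => (measurableSet_lt measurable_const hf).nullMeasurableSet) hanti
    ⟨0, measure_ne_top P _⟩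
  rwa [hempty, measure_empty] at this

lemma indepFun_of_eq_comp_finset {ι β γ δ : Type*} [MeasurableSpace β] [MeasurableSpace γ]
    [MeasurableSpace δ] {Q : ι → Ω → β} (hQ : ∀ i, Measurable (Q i)) (hindep : iIndepFun Q P)
    {S T : Finset ι} (hST : Disjoint S T) {F : (S → β) → γ} {G : (T → β) → δ}
    (hF : Measurable F) (hG : Measurable G) {f : Ω → γ} {g : Ω → δ}
    (hf : f = fun ω => F fun i => Q i ω) (hg : g = fun ω => G fun i => Q i ω) :
    IndepFun f g P :=
  hf ▸ hg ▸ (hindep.indepFun_finset S T hST hQ).comp hF hG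

lemma lintegral_comp_prod_le_pow {ι : Type*} [DecidableEq ι] {Y : ι → Ω → ℝ}
    (hY : ∀ i, Measurable (Y i)) (hindep : iIndepFun Y P) (hYpos : ∀ i ω, 0 < Y i ω)
    {h : ℝ → ℝ≥0∞} (hh : Measurable h) (hmul : ∀ v w, 0 < v → 0 < w → h (v * w) ≤ h v * h w)
    (hone : h 1 ≤ 1) {I : ℝ≥0∞} (hI : ∀ i, ∫⁻ ω, h (Y i ω) ∂P ≤ I) (S : Finset ι) :
    ∫⁻ ω, h (∏ i ∈ S, Y i ω) ∂P ≤ I ^ S.card := by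
  have := hindep.isProbabilityMeasure
  induction S using Finset.induction_on with
  | empty => simpa using hone
  | @insert a S ha ih =>
    have hind : IndepFun (fun ω => h (Y a ω)) (fun ω => h (∏ i ∈ S, Y i ω)) P := by
      have := (hindep.indepFun_finsetProd_of_notMem hY ha).symm.comp hh hh
      convert this using 2 with ω <;> simp only [Function.comp_apply, Finset.prod_apply]
    calc ∫⁻ ω, h (∏ i ∈ insert a S, Y i ω) ∂P
        ≤ ∫⁻ ω, ((fun ω => h (Y a ω)) * fun ω => h (∏ i ∈ S, Y i ω)) ω ∂P := by
          refine lintegral_mono fun ω => ?_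
          rw [Finset.prod_insert ha]
          exact hmul _ _ (hYpos a ω) (Finset.prod_pos fun i _ => hYpos i ω)
      _ = (∫⁻ ω, h (Y a ω) ∂P) * ∫⁻ ω, h (∏ i ∈ S, Y i ω) ∂P :=
          lintegral_mul_eq_lintegral_mul_lintegral_of_indepFun (hh.comp (hY a))
            (hh.comp (Finset.measurable_prod _ fun i _ => hY i)) hind
      _ ≤ I * I ^ S.card := mul_le_mul' (hI a) ih
      _ = I ^ (insert a S).card := by rw [Finset.card_insert_of_notMem ha, pow_succ']

lemma measure_mem_and_lt_mul_le [IsFiniteMeasure P] {V Z : Ω → ℝ} (hV : Measurable V)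
    (hZ : Measurable Z) (hVZ : IndepFun V Z P) (hVpos : ∀ ω, 0 < V ω) {A : Set ℝ}
    (hA : MeasurableSet A) {h : ℝ → ℝ≥0∞} (hh : Measurable h) {u : ℝ} {c : ℝ≥0∞}
    (hZu : ∀ v, 0 < v → P {ω | u / v < Z ω} ≤ h v * c) :
    P {ω | V ω ∈ A ∧ u < V ω * Z ω} ≤ (∫⁻ ω in V ⁻¹' A, h (V ω) ∂P) * c := by
  set S : Set (ℝ × ℝ) := {p | p.1 ∈ A ∧ u < p.1 * p.2}
  have hS : MeasurableSet S :=
    (measurable_fst hA).inter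
      (measurableSet_lt measurable_const (measurable_fst.mul measurable_snd))
  have hVpos' : ∀ᵐ v ∂P.map V, 0 < v :=
    (ae_map_iff hV.aemeasurable measurableSet_Ioi).2 (ae_of_all _ hVpos)
  calc P {ω | V ω ∈ A ∧ u < V ω * Z ω} = P.map (fun ω => (V ω, Z ω)) S := by
        rw [Measure.map_apply (hV.prodMk hZ) hS]; rfl
    _ = ∫⁻ v, P.map Z (Prod.mk v ⁻¹' S) ∂P.map V := by
        rw [(indepFun_iff_map_prod_eq_prod_map_map hV.aemeasurable hZ.aemeasurable).1 hVZ,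
          Measure.prod_apply hS]
    _ ≤ ∫⁻ v, A.indicator (fun v => h v * c) v ∂P.map V := by
        refine lintegral_mono_ae ?_
        filter_upwards [hVpos'] with v hv
        by_cases hvA : v ∈ A
        · have hpre : Prod.mk v ⁻¹' S = Ioi (u / v) := by
            ext z; simp [S, hvA, div_lt_iff₀' hv]
          rw [hpre, Measure.map_apply hZ measurableSet_Ioi, indicator_of_mem hvA]
          exact hZu v hv
        · have hpre : Prod.mk v ⁻¹' S = ∅ := by ext z; simp [S, hvA]
          simp [hpre, hvA]
    _ = (∫⁻ ω in V ⁻¹' A, h (V ω) ∂P) * c := by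
        rw [lintegral_indicator hA, lintegral_mul_const _ hh, setLIntegral_map hA hh hV]

lemma measure_lt_mul_and_lt_mul_le [IsFiniteMeasure P] {U M R : Ω → ℝ} (hM : Measurable M)
    (hR : Measurable R) (hUnn : ∀ ω, 0 ≤ U ω) (hRnn : ∀ ω, 0 ≤ R ω) (hMpos : ∀ ω, 0 < M ω)
    (hUR : IndepFun U R P) (hMR : IndepFun M R P) {g : ℝ → ℝ≥0∞} (hg : Measurable g)
    {T : ℝ → ℝ≥0∞} (hRT : ∀ v, 0 < v → ∀ x, 0 < x → P {ω | x / v < R ω} ≤ g v * T x)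
    {n x : ℝ} (hn : 0 < n) (hx : 0 < x) :
    P {ω | x < U ω * M ω ∧ x < M ω * R ω} ≤
      P {ω | x / n < U ω} * (g n * T x) + (∫⁻ ω in M ⁻¹' Ioi n, g (M ω) ∂P) * T x := by
  have hsplit : {ω | x < U ω * M ω ∧ x < M ω * R ω} ⊆
      (U ⁻¹' Ioi (x / n) ∩ R ⁻¹' Ioi (x / n)) ∪ {ω | M ω ∈ Ioi n ∧ x < M ω * R ω} := by
    rintro ω ⟨hUM, hMR⟩
    by_cases hMn : M ω ≤ n
    · refine Or.inl ⟨?_, ?_⟩ <;> simp only [Set.mem_preimage, Set.mem_Ioi, div_lt_iff₀ hn]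
      · nlinarith [hUnn ω]
      · nlinarith [hRnn ω]
    · exact Or.inr ⟨lt_of_not_ge hMn, hMR⟩
  calc P {ω | x < U ω * M ω ∧ x < M ω * R ω}
      ≤ P (U ⁻¹' Ioi (x / n) ∩ R ⁻¹' Ioi (x / n)) + P {ω | M ω ∈ Ioi n ∧ x < M ω * R ω} :=
        (measure_mono hsplit).trans (measure_union_le _ _)
    _ ≤ P {ω | x / n < U ω} * (g n * T x) + (∫⁻ ω in M ⁻¹' Ioi n, g (M ω) ∂P) * T x := by
        rw [hUR.measure_inter_preimage_eq_mul _ _ measurableSet_Ioi measurableSet_Ioi]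
        exact add_le_add (mul_le_mul' le_rfl (hRT n hn x hx))
          (measure_mem_and_lt_mul_le hM hR hMR hMpos measurableSet_Ioi hg fun v hv => hRT v hv x hx)

lemma isLittleO_measure_lt_mul_and_lt_mul [IsFiniteMeasure P] {U M R : Ω → ℝ}
    (hUMR : IndepFun (fun ω => (U ω, M ω)) R P) (hU : Measurable U) (hM : Measurable M)
    (hR : Measurable R) (hUnn : ∀ ω, 0 ≤ U ω) (hRnn : ∀ ω, 0 ≤ R ω) (hMpos : ∀ ω, 0 < M ω)
    {g : ℝ → ℝ≥0∞} (hg : Measurable g) (hg_top : ∀ v, g v ≠ ∞)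
    (hgM : ∫⁻ ω, g (M ω) ∂P ≠ ∞) {T : ℝ → ℝ≥0∞} (hT : ∀ x, T x ≠ ∞)
    (hRT : ∀ v, 0 < v → ∀ x, 0 < x → P {ω | x / v < R ω} ≤ g v * T x) :
    (fun x => (P {ω | x < U ω * M ω ∧ x < M ω * R ω}).toReal) =o[atTop]
      fun x => (T x).toReal := by
  refine isLittleO_toReal_of_forall_eventually_le_mul hT fun ε hε => ?_
  have hε2 : 0 < ε / 2 := ENNReal.half_pos hε.ne'
  have hMtail := tendsto_setLIntegral_zero hgM (tendsto_measure_lt_atTop (P := P) hM)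
  obtain ⟨n, hn, hMn⟩ :=
    ((eventually_gt_atTop 0).and (hMtail.eventually_lt_const hε2)).exists
  have hUtail : Tendsto (fun x => P {ω | x / n < U ω} * g n) atTop (𝓝 0) := by
    simpa using ENNReal.Tendsto.mul_const
      ((tendsto_measure_lt_atTop hU).comp (tendsto_id.atTop_div_const hn)) (Or.inr (hg_top n))
  filter_upwards [hUtail.eventually_lt_const hε2, eventually_gt_atTop 0] with x hUx hx
  calc P {ω | x < U ω * M ω ∧ x < M ω * R ω}
      ≤ P {ω | x / n < U ω} * (g n * T x) + (∫⁻ ω in M ⁻¹' Ioi n, g (M ω) ∂P) * T x :=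
        measure_lt_mul_and_lt_mul_le hM hR hUnn hRnn hMpos (hUMR.comp measurable_fst measurable_id)
          (hUMR.comp measurable_snd measurable_id) hg hRT hn hx
    _ = (P {ω | x / n < U ω} * g n + ∫⁻ ω in M ⁻¹' Ioi n, g (M ω) ∂P) * T x := by ring
    _ ≤ (ε / 2 + ε / 2) * T x := by gcongr; exact hMn.le
    _ = ε * T x := by rw [ENNReal.add_halves]

lemma measure_lt_mul_prod_eq_zero {ι : Type*} {Z : Ω → ℝ} {Y : ι → Ω → ℝ}
    (hY : ∀ i ω, 0 ≤ Y i ω) {u₀ v₀ : ℝ} (hu₀ : 0 ≤ u₀) (hZ : P {ω | u₀ < Z ω} = 0)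
    (hYv : ∀ i, P {ω | v₀ < Y i ω} = 0) (S : Finset ι) {x : ℝ} (hx : u₀ * v₀ ^ S.card ≤ x) :
    P {ω | x < Z ω * ∏ i ∈ S, Y i ω} = 0 := by
  refine measure_mono_null (fun ω hω => ?_) (measure_union_null hZ
    ((measure_biUnion_null_iff S.countable_toSet).2 fun i _ => hYv i))
  by_contra hbad
  simp only [mem_union, mem_ofPred_eq, mem_iUnion, exists_prop, not_or, not_exists, not_and,
    not_lt] at hbad
  have hprod : ∏ i ∈ S, Y i ω ≤ v₀ ^ S.card := by
    simpa using Finset.prod_le_prod (fun i _ => hY i ω) hbad.2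
  have : Z ω * ∏ i ∈ S, Y i ω ≤ u₀ * v₀ ^ S.card :=
    mul_le_mul hbad.1 hprod (Finset.prod_nonneg fun i _ => hY i ω) hu₀
  exact (hω.trans_le this).not_ge hx

end ProductTails

structure IsTailRatioBound (T h : ℝ → ℝ≥0∞) : Prop where
  measurable : Measurable h
  ne_top : ∀ v, h v ≠ ∞
  le_mul : ∀ v, 0 < v → ∀ x, 0 < x → T (x / v) ≤ h v * T x
  map_mul_le : ∀ v w, 0 < v → 0 < w → h (v * w) ≤ h v * h w
  map_one_le : h 1 ≤ 1

/-- `H̃ v` is the supremum of this set for `T u = P[XY > u]`. Where `T x = 0` the ratio is the junk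
value `0`, which is why `T` is assumed positive below. -/
def tailRatios (T : ℝ → ℝ≥0∞) (v : ℝ) : Set ℝ :=
  {r | ∃ x : ℝ, 0 < x ∧ r = (T (x / v)).toReal / (T x).toReal}

section TailRatios

variable {T : ℝ → ℝ≥0∞} {H : ℝ → ℝ}

lemma tailRatios_nonempty (v : ℝ) : (tailRatios T v).Nonempty := ⟨_, 1, one_pos, rfl⟩

lemma toReal_le_mul_of_eq_sSup_tailRatios {v x : ℝ} (hH : H v = sSup (tailRatios T v))
    (hbdd : BddAbove (tailRatios T v)) (hx : 0 < x) (hTx : T x ≠ 0) (hTx' : T x ≠ ∞) :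
    (T (x / v)).toReal ≤ H v * (T x).toReal := by
  have := le_csSup hbdd ⟨x, hx, rfl⟩
  rwa [← hH, div_le_iff₀ (ENNReal.toReal_pos hTx hTx')] at this

lemma nonneg_of_eq_sSup_tailRatios {v : ℝ} (hH : H v = sSup (tailRatios T v))
    (hbdd : BddAbove (tailRatios T v)) : 0 ≤ H v :=
  hH ▸ le_csSup_of_le hbdd ⟨1, one_pos, rfl⟩ (by positivity)

lemma mul_le_of_eq_sSup_tailRatios (hT0 : ∀ x, 0 < x → T x ≠ 0) (hTtop : ∀ x, T x ≠ ∞)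
    (hH : ∀ v, 0 < v → H v = sSup (tailRatios T v))
    (hbdd : ∀ v, 0 < v → BddAbove (tailRatios T v)) {v w : ℝ} (hv : 0 < v) (hw : 0 < w) :
    H (v * w) ≤ H v * H w := by
  rw [hH _ (mul_pos hv hw)]
  refine csSup_le (tailRatios_nonempty _) ?_
  rintro r ⟨x, hx, rfl⟩
  rw [div_le_iff₀ (ENNReal.toReal_pos (hT0 x hx) (hTtop x)), mul_comm v, ← div_div]
  calc (T (x / w / v)).toReal ≤ H v * (T (x / w)).toReal :=
        toReal_le_mul_of_eq_sSup_tailRatios (hH v hv) (hbdd v hv) (div_pos hx hw)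
          (hT0 _ (div_pos hx hw)) (hTtop _)
    _ ≤ H v * (H w * (T x).toReal) :=
        mul_le_mul_of_nonneg_left
          (toReal_le_mul_of_eq_sSup_tailRatios (hH w hw) (hbdd w hw) hx (hT0 x hx) (hTtop x))
          (nonneg_of_eq_sSup_tailRatios (hH v hv) (hbdd v hv))
    _ = H v * H w * (T x).toReal := by ring

lemma le_one_of_eq_sSup_tailRatios (hT0 : ∀ x, 0 < x → T x ≠ 0) (hTtop : ∀ x, T x ≠ ∞)
    (hH : H 1 = sSup (tailRatios T 1)) : H 1 ≤ 1 := by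
  rw [hH]
  refine csSup_le (tailRatios_nonempty _) ?_
  rintro r ⟨x, hx, rfl⟩
  rw [div_one, div_self (ENNReal.toReal_pos (hT0 x hx) (hTtop x)).ne']

lemma monotoneOn_of_eq_sSup_tailRatios (hT : Antitone T) (hTtop : ∀ x, T x ≠ ∞)
    (hH : ∀ v, 0 < v → H v = sSup (tailRatios T v))
    (hbdd : ∀ v, 0 < v → BddAbove (tailRatios T v)) : MonotoneOn H (Ioi 0) := by
  intro v hv w hw hvw
  rw [hH v hv, hH w hw]
  refine csSup_le (tailRatios_nonempty _) ?_
  rintro r ⟨x, hx, rfl⟩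
  refine le_csSup_of_le (hbdd w hw) ⟨x, hx, rfl⟩ (div_le_div_of_nonneg_right ?_ (by positivity))
  exact ENNReal.toReal_mono (hTtop _) (hT (div_le_div_of_nonneg_left hx.le hv hvw))

lemma isTailRatioBound_of_eq_sSup (hT : Antitone T) (hT0 : ∀ x, 0 < x → T x ≠ 0)
    (hTtop : ∀ x, T x ≠ ∞) (hH : ∀ v, 0 < v → H v = sSup (tailRatios T v))
    (hbdd : ∀ v, 0 < v → BddAbove (tailRatios T v)) :
    IsTailRatioBound T fun v => ENNReal.ofReal ((Ioi 0).indicator H v) where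
  ne_top _ := ENNReal.ofReal_ne_top
  measurable := by
    -- `H` itself is monotone only on `(0, ∞)`; its cut-off is monotone on `ℝ`, hence measurable.
    refine ENNReal.measurable_ofReal.comp (Monotone.measurable fun v w hvw => ?_)
    by_cases hv : 0 < v
    · have hw : 0 < w := hv.trans_le hvw
      simp only [indicator_of_mem (mem_Ioi.2 hv), indicator_of_mem (mem_Ioi.2 hw)]
      exact monotoneOn_of_eq_sSup_tailRatios hT hTtop hH hbdd hv hw hvw
    · rw [indicator_of_notMem (notMem_Ioi.2 (not_lt.1 hv))]
      exact indicator_nonneg (fun w hw => nonneg_of_eq_sSup_tailRatios (hH w hw) (hbdd w hw)) w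
  le_mul v hv x hx := by
    rw [indicator_of_mem (mem_Ioi.2 hv), ← ENNReal.ofReal_toReal (hTtop (x / v)),
      ← ENNReal.ofReal_toReal (hTtop x), ← ENNReal.ofReal_mul
        (nonneg_of_eq_sSup_tailRatios (hH v hv) (hbdd v hv))]
    exact ENNReal.ofReal_le_ofReal
      (toReal_le_mul_of_eq_sSup_tailRatios (hH v hv) (hbdd v hv) hx (hT0 x hx) (hTtop x))
  map_mul_le v w hv hw := by
    rw [indicator_of_mem (mem_Ioi.2 (mul_pos hv hw)), indicator_of_mem (mem_Ioi.2 hv),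
      indicator_of_mem (mem_Ioi.2 hw), ← ENNReal.ofReal_mul
        (nonneg_of_eq_sSup_tailRatios (hH v hv) (hbdd v hv))]
    exact ENNReal.ofReal_le_ofReal (mul_le_of_eq_sSup_tailRatios hT0 hTtop hH hbdd hv hw)
  map_one_le := by
    rw [indicator_of_mem (mem_Ioi.2 one_pos)]
    exact ENNReal.ofReal_le_one.2 (le_one_of_eq_sSup_tailRatios hT0 hTtop (hH 1 one_pos))

end TailRatios

section Sarmanov

variable {μ ν : Measure ℝ} {φ₁ φ₂ : ℝ → ℝ} {θ b₁ b₂ : ℝ}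

lemma sarmanov_rectangle_nonpos [IsFiniteMeasure μ] [IsFiniteMeasure ν] (hφ₁ : Measurable φ₁)
    (hφ₂ : Measurable φ₂) (hb₁ : ∀ x, |φ₁ x| ≤ b₁) (hb₂ : ∀ y, |φ₂ y| ≤ b₂) {A B : Set ℝ}
    (hA : MeasurableSet A) (hB : MeasurableSet B)
    (hnull : ((μ.prod ν).withDensity fun p => ENNReal.ofReal (1 + θ * φ₁ p.1 * φ₂ p.2))
      (A ×ˢ B) = 0) :
    μ.real A * ν.real B + θ * ((∫ x in A, φ₁ x ∂μ) * ∫ y in B, φ₂ y ∂ν) ≤ 0 := by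
  have hAB := hA.prod hB
  have hφ : Measurable fun p : ℝ × ℝ => φ₁ p.1 * φ₂ p.2 :=
    (hφ₁.comp measurable_fst).mul (hφ₂.comp measurable_snd)
  have hφ_int : Integrable (fun p : ℝ × ℝ => φ₁ p.1 * φ₂ p.2) ((μ.prod ν).restrict (A ×ˢ B)) :=
    .of_bound hφ.aestronglyMeasurable (b₁ * b₂) (ae_of_all _ fun p => by
      rw [Real.norm_eq_abs, abs_mul]
      exact mul_le_mul (hb₁ p.1) (hb₂ p.2) (abs_nonneg _) ((abs_nonneg _).trans (hb₁ p.1)))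
  have hdensity : ∀ᵐ p ∂μ.prod ν, p ∈ A ×ˢ B → 1 + θ * (φ₁ p.1 * φ₂ p.2) ≤ 0 := by
    have hρ : Measurable fun p : ℝ × ℝ => ENNReal.ofReal (1 + θ * φ₁ p.1 * φ₂ p.2) := by
      fun_prop
    rw [withDensity_apply _ hAB, setLIntegral_eq_zero_iff hAB hρ] at hnull
    filter_upwards [hnull] with p hp hpAB
    simpa [mul_assoc] using hp hpAB
  have := setIntegral_nonpos_ae hAB hdensity
  rwa [integral_add (integrable_const 1) (hφ_int.const_mul θ), integral_const_mul,
    setIntegral_prod_mul, integral_const, measureReal_restrict_apply_univ, measureReal_prod_prod,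
    smul_eq_mul, mul_one] at this

lemma measureReal_Ioi_mul_le_zero_of_sarmanov [IsFiniteMeasure μ] [IsProbabilityMeasure ν]
    (hφ₁ : Measurable φ₁) (hφ₂ : Measurable φ₂) (hb₁ : ∀ x, |φ₁ x| ≤ b₁)
    (hb₂ : ∀ y, |φ₂ y| ≤ b₂) (hmean : ∫ y, φ₂ y ∂ν = 0) {x₀ c : ℝ} (hx₀ : 0 < x₀) (hc : 0 < c)
    (hnull : ((μ.prod ν).withDensity fun p => ENNReal.ofReal (1 + θ * φ₁ p.1 * φ₂ p.2))
      {p | x₀ < p.1 * p.2} = 0) :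
    μ.real (Ioi (x₀ / c)) * (1 - (1 + |θ| * b₁ * b₂) * ν.real (Iic c)) ≤ 0 := by
  have hsub : Ioi (x₀ / c) ×ˢ Ioi c ⊆ {p : ℝ × ℝ | x₀ < p.1 * p.2} := by
    rintro ⟨a, b⟩ ⟨ha, hb⟩
    have ha' : x₀ < a * c := (div_lt_iff₀ hc).1 ha
    have ha0 : 0 < a := (div_pos hx₀ hc).trans ha
    show x₀ < a * b
    nlinarith [mul_lt_mul_of_pos_left (show c < b from hb) ha0]
  have hrect := sarmanov_rectangle_nonpos hφ₁ hφ₂ hb₁ hb₂ measurableSet_Ioi measurableSet_Ioi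
    (measure_mono_null hsub hnull)
  have hG : ν.real (Ioi c) = 1 - ν.real (Iic c) := by
    rw [← compl_Iic, measureReal_compl measurableSet_Iic, probReal_univ]
  have hI₁ : |∫ x in Ioi (x₀ / c), φ₁ x ∂μ| ≤ b₁ * μ.real (Ioi (x₀ / c)) :=
    (Real.norm_eq_abs _).symm.trans_le
      (norm_setIntegral_le_of_norm_le_const (measure_lt_top _ _) fun x _ => hb₁ x)
  have hI₂ : |∫ y in Ioi c, φ₂ y ∂ν| ≤ b₂ * ν.real (Iic c) := by
    have hφ₂_int : Integrable φ₂ ν :=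
      .of_bound hφ₂.aestronglyMeasurable b₂ (ae_of_all _ hb₂)
    have hsplit := integral_add_compl (measurableSet_Iic (a := c)) hφ₂_int
    rw [compl_Iic, hmean, add_eq_zero_iff_eq_neg'] at hsplit
    rw [hsplit, abs_neg]
    exact (Real.norm_eq_abs _).symm.trans_le
      (norm_setIntegral_le_of_norm_le_const (measure_lt_top _ _) fun y _ => hb₂ y)
  have hcross : |θ * ((∫ x in Ioi (x₀ / c), φ₁ x ∂μ) * ∫ y in Ioi c, φ₂ y ∂ν)| ≤
      |θ| * ((b₁ * μ.real (Ioi (x₀ / c))) * (b₂ * ν.real (Iic c))) := by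
    rw [abs_mul, abs_mul]
    gcongr
    exact (abs_nonneg _).trans hI₁
  rw [hG] at hrect
  nlinarith [neg_abs_le (θ * ((∫ x in Ioi (x₀ / c), φ₁ x ∂μ) * ∫ y in Ioi c, φ₂ y ∂ν))]

lemma exists_measure_Ioi_eq_zero_of_sarmanov [IsFiniteMeasure μ] [IsProbabilityMeasure ν]
    (hφ₁ : Measurable φ₁) (hφ₂ : Measurable φ₂) (hb₁ : ∀ x, |φ₁ x| ≤ b₁)
    (hb₂ : ∀ y, |φ₂ y| ≤ b₂) (hmean : ∫ y, φ₂ y ∂ν = 0) (hν : ν (Iic 0) = 0) {x₀ : ℝ}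
    (hx₀ : 0 < x₀)
    (hnull : ((μ.prod ν).withDensity fun p => ENNReal.ofReal (1 + θ * φ₁ p.1 * φ₂ p.2))
      {p | x₀ < p.1 * p.2} = 0) :
    ∃ u, 0 < u ∧ μ (Ioi u) = 0 := by
  have hν_Iic : Tendsto (fun c => ν (Iic c)) (𝓝[>] 0) (𝓝 0) := by
    have := tendsto_measure_biInter_gt (μ := ν) (s := Iic) (a := (0 : ℝ))
      (fun r _ => measurableSet_Iic.nullMeasurableSet) (fun i j _ hij => Iic_subset_Iic.2 hij)
      ⟨1, one_pos, measure_ne_top _ _⟩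
    have hinter : ⋂ r > (0 : ℝ), Iic r = Iic 0 := by
      ext x
      simp only [mem_iInter, mem_Iic]
      exact ⟨le_of_forall_gt_imp_ge_of_dense, fun h r hr => h.trans hr.le⟩
    rwa [hinter, hν] at this
  have hlim : Tendsto (fun c => 1 - (1 + |θ| * b₁ * b₂) * ν.real (Iic c)) (𝓝[>] 0) (𝓝 1) := by
    simpa [measureReal_def] using
      (((ENNReal.tendsto_toReal ENNReal.zero_ne_top).comp hν_Iic).const_mul
        (1 + |θ| * b₁ * b₂)).const_sub 1
  obtain ⟨c, hc, hc_pos⟩ :=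
    ((hlim.eventually (lt_mem_nhds one_pos)).and self_mem_nhdsWithin).exists
  refine ⟨x₀ / c, div_pos hx₀ hc_pos, ?_⟩
  have := measureReal_Ioi_mul_le_zero_of_sarmanov hφ₁ hφ₂ hb₁ hb₂ hmean hx₀ hc_pos hnull
  exact (measureReal_eq_zero_iff (measure_ne_top _ _)).1
    (le_antisymm (nonpos_of_mul_nonpos_left this hc) measureReal_nonneg)

lemma exists_measure_lt_eq_zero_of_sarmanov {Ω : Type*} [MeasurableSpace Ω] {P : Measure Ω}
    [IsProbabilityMeasure P] {ξ η : Ω → ℝ} (hξ : Measurable ξ) (hη : Measurable η)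
    (hηpos : ∀ ω, 0 < η ω) (hφ₁ : Measurable φ₁) (hφ₂ : Measurable φ₂)
    (hb₁ : ∀ x, |φ₁ x| ≤ b₁) (hb₂ : ∀ y, |φ₂ y| ≤ b₂) (hmean : ∫ ω, φ₂ (η ω) ∂P = 0)
    (hjoint : P.map (fun ω => (ξ ω, η ω)) =
      ((P.map ξ).prod (P.map η)).withDensity fun p => ENNReal.ofReal (1 + θ * φ₁ p.1 * φ₂ p.2))
    {x₀ : ℝ} (hx₀ : 0 < x₀) (hnull : P {ω | x₀ < ξ ω * η ω} = 0) :
    ∃ u₀, 0 < u₀ ∧ P {ω | u₀ < ξ ω} = 0 := by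
  have : IsProbabilityMeasure (P.map η) := Measure.isProbabilityMeasure_map hη.aemeasurable
  obtain ⟨u₀, hu₀, hF⟩ := exists_measure_Ioi_eq_zero_of_sarmanov (μ := P.map ξ) hφ₁ hφ₂ hb₁ hb₂
    (by rwa [integral_map hη.aemeasurable hφ₂.aestronglyMeasurable])
    (by rw [Measure.map_apply hη measurableSet_Iic]
        exact measure_mono_null (t := ∅) (fun ω hω => (hηpos ω).not_ge hω) measure_empty)
    hx₀
    (by rw [← hjoint, Measure.map_apply (hξ.prodMk hη) (measurableSet_lt measurable_const
          (measurable_fst.mul measurable_snd) : MeasurableSet {p : ℝ × ℝ | x₀ < p.1 * p.2})]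
        exact hnull)
  exact ⟨u₀, hu₀, by rwa [Measure.map_apply hξ measurableSet_Ioi] at hF⟩

end Sarmanov

section IidPairs

variable {Ω : Type*} [MeasurableSpace Ω] {P : Measure Ω} {X Y : ℕ → Ω → ℝ}

lemma lintegral_comp_prod_ne_top (hY : ∀ i, Measurable (Y i)) (hYpos : ∀ i ω, 0 < Y i ω)
    (hiid : iIndepFun (fun i ω => (X i ω, Y i ω)) P)
    (hid : ∀ i, IdentDistrib (fun ω => (X i ω, Y i ω)) (fun ω => (X 1 ω, Y 1 ω)) P P)
    {T h : ℝ → ℝ≥0∞} (hh : IsTailRatioBound T h) (hI : ∫⁻ ω, h (Y 1 ω) ∂P ≠ ∞)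
    (S : Finset ℕ) : ∫⁻ ω, h (∏ i ∈ S, Y i ω) ∂P ≠ ∞ :=
  ((lintegral_comp_prod_le_pow hY (hiid.comp (fun _ => Prod.snd) fun _ => measurable_snd)
    hYpos hh.measurable hh.map_mul_le hh.map_one_le
    (fun i => ((hid i).comp (hh.measurable.comp measurable_snd)).lintegral_eq.le) S).trans_lt
    (ENNReal.pow_lt_top hI.lt_top)).ne

lemma indepFun_prodMk_prod_Icc_mul_prod_Ioc (hX : ∀ i, Measurable (X i))
    (hY : ∀ i, Measurable (Y i)) (hiid : iIndepFun (fun i ω => (X i ω, Y i ω)) P) {s t : ℕ}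
    (hs : 1 ≤ s) (hst : s < t) :
    IndepFun (fun ω => (X s ω, ∏ i ∈ Finset.Icc 1 s, Y i ω))
      (fun ω => X t ω * ∏ i ∈ Finset.Ioc s t, Y i ω) P :=
  indepFun_of_eq_comp_finset (fun i => (hX i).prodMk (hY i)) hiid
    (S := Finset.Icc 1 s) (T := Finset.Ioc s t)
    (Finset.disjoint_left.2 fun i hi hi' => by
      simp only [Finset.mem_Icc, Finset.mem_Ioc] at hi hi'; omega)
    (F := fun v => ((v ⟨s, Finset.mem_Icc.2 ⟨hs, le_rfl⟩⟩).1, ∏ i, (v i).2))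
    (G := fun v => (v ⟨t, Finset.mem_Ioc.2 ⟨hst, le_rfl⟩⟩).1 * ∏ i, (v i).2)
    (by fun_prop) (by fun_prop)
    (funext fun ω => by simp only [Finset.prod_coe_sort _ fun i => Y i ω])
    (funext fun ω => by simp only [Finset.prod_coe_sort _ fun i => Y i ω])

lemma measure_lt_mul_prod_Ioc_le [IsProbabilityMeasure P] (hX : ∀ i, Measurable (X i))
    (hY : ∀ i, Measurable (Y i)) (hYpos : ∀ i ω, 0 < Y i ω)
    (hiid : iIndepFun (fun i ω => (X i ω, Y i ω)) P)
    (hid : ∀ i, IdentDistrib (fun ω => (X i ω, Y i ω)) (fun ω => (X 1 ω, Y 1 ω)) P P)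
    {h : ℝ → ℝ≥0∞} (hh : IsTailRatioBound (fun u => P {ω | u < X 1 ω * Y 1 ω}) h)
    {s m : ℕ} (hsm : s ≤ m) {u : ℝ} (hu : 0 < u) :
    P {ω | u < X (m + 1) ω * ∏ i ∈ Finset.Ioc s (m + 1), Y i ω} ≤
      (∫⁻ ω, h (∏ i ∈ Finset.Ioc s m, Y i ω) ∂P) * P {ω | u < X 1 ω * Y 1 ω} := by
  have hVZ : IndepFun (fun ω => ∏ i ∈ Finset.Ioc s m, Y i ω)
      (fun ω => X (m + 1) ω * Y (m + 1) ω) P :=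
    indepFun_of_eq_comp_finset (fun i => (hX i).prodMk (hY i)) hiid
      (S := Finset.Ioc s m) (T := {m + 1}) (by simp)
      (F := fun v => ∏ i, (v i).2)
      (G := fun v => (v ⟨m + 1, Finset.mem_singleton_self _⟩).1 *
        (v ⟨m + 1, Finset.mem_singleton_self _⟩).2)
      (by fun_prop) (by fun_prop)
      (funext fun ω => (Finset.prod_coe_sort _ fun i => Y i ω).symm) rfl
  have hZ : ∀ v, P {ω | v < X (m + 1) ω * Y (m + 1) ω} = P {ω | v < X 1 ω * Y 1 ω} :=
    fun v => (hid (m + 1)).measure_mem_eq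
      (measurableSet_lt measurable_const (measurable_fst.mul measurable_snd))
  have := measure_mem_and_lt_mul_le (Finset.measurable_prod _ fun i _ => hY i)
    (Z := fun ω => X (m + 1) ω * Y (m + 1) ω) ((hX _).mul (hY _)) hVZ
    (fun ω => Finset.prod_pos fun i _ => hYpos i ω) MeasurableSet.univ
    hh.measurable fun v hv => (hZ _).trans_le (hh.le_mul v hv u hu)
  simp only [mem_univ, true_and, preimage_univ, Measure.restrict_univ] at this
  convert this using 4 with ω
  rw [Finset.prod_Ioc_succ_top hsm, mul_left_comm]

theorem isLittleO_joint_tail_of_isTailRatioBound [IsProbabilityMeasure P]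
    (hX : ∀ i, Measurable (X i)) (hY : ∀ i, Measurable (Y i)) (hXnn : ∀ i ω, 0 ≤ X i ω)
    (hYpos : ∀ i ω, 0 < Y i ω) (hiid : iIndepFun (fun i ω => (X i ω, Y i ω)) P)
    (hid : ∀ i, IdentDistrib (fun ω => (X i ω, Y i ω)) (fun ω => (X 1 ω, Y 1 ω)) P P)
    {h : ℝ → ℝ≥0∞} (hh : IsTailRatioBound (fun u => P {ω | u < X 1 ω * Y 1 ω}) h)
    (hI : ∫⁻ ω, h (Y 1 ω) ∂P ≠ ∞) {s t : ℕ} (hs : 1 ≤ s) (hst : s < t) :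
    (fun x => (P {ω | x < X s ω * ∏ i ∈ Finset.Icc 1 s, Y i ω ∧
      x < X t ω * ∏ i ∈ Finset.Icc 1 t, Y i ω}).toReal) =o[atTop]
      fun x => (P {ω | x < X 1 ω * Y 1 ω}).toReal := by
  obtain ⟨m, rfl⟩ : ∃ m, t = m + 1 := ⟨t - 1, by omega⟩
  have hfin := lintegral_comp_prod_ne_top hY hYpos hiid hid hh hI
  set J := ∫⁻ ω, h (∏ i ∈ Finset.Ioc s m, Y i ω) ∂P
  have key := isLittleO_measure_lt_mul_and_lt_mul
    (indepFun_prodMk_prod_Icc_mul_prod_Ioc hX hY hiid hs hst) (hX s)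
    (Finset.measurable_prod _ fun i _ => hY i)
    ((hX _).mul (Finset.measurable_prod _ fun i _ => hY i)) (hXnn s)
    (fun ω => mul_nonneg (hXnn _ ω) (Finset.prod_nonneg fun i _ => (hYpos i ω).le))
    (fun ω => Finset.prod_pos fun i _ => hYpos i ω) (g := fun v => J * h v)
    (measurable_const.mul hh.measurable)
    (fun v => ENNReal.mul_ne_top (hfin _) (hh.ne_top v))
    (by rw [lintegral_const_mul' _ _ (hfin _)]; exact ENNReal.mul_ne_top (hfin _) (hfin _))
    (fun x => measure_ne_top P _) fun v hv x hx =>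
      calc _ ≤ J * P {ω | x / v < X 1 ω * Y 1 ω} :=
            measure_lt_mul_prod_Ioc_le hX hY hYpos hiid hid hh (by omega) (div_pos hx hv)
        _ ≤ J * (h v * P {ω | x < X 1 ω * Y 1 ω}) := mul_le_mul' le_rfl (hh.le_mul v hv x hx)
        _ = J * h v * P {ω | x < X 1 ω * Y 1 ω} := (mul_assoc _ _ _).symm
  refine key.congr' (Eventually.of_forall fun x => ?_) EventuallyEq.rfl
  simp only [← Finset.prod_Icc_one_mul_prod_Ioc _ (by omega : s ≤ m + 1),
    mul_left_comm (X (m + 1) _)]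

lemma eventually_measure_lt_mul_prod_eq_zero [IsFiniteMeasure P] (hYpos : ∀ i ω, 0 < Y i ω)
    (hid : ∀ i, IdentDistrib (fun ω => (X i ω, Y i ω)) (fun ω => (X 1 ω, Y 1 ω)) P P)
    (hGF : (fun x => (P {ω | x < Y 1 ω}).toReal) =O[atTop] fun x => (P {ω | x < X 1 ω}).toReal)
    {u₀ : ℝ} (hu₀ : 0 ≤ u₀) (hX1 : P {ω | u₀ < X 1 ω} = 0) (t : ℕ) :
    ∀ᶠ x in atTop, P {ω | x < X t ω * ∏ i ∈ Finset.Icc 1 t, Y i ω} = 0 := by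
  obtain ⟨v₀, hGv₀, hv₀⟩ := (hGF.eq_zero_imp.and (eventually_ge_atTop u₀)).exists
  have hY1 : P {ω | v₀ < Y 1 ω} = 0 := by
    refine ((ENNReal.toReal_eq_zero_iff _).1 (hGv₀ ?_)).resolve_right (measure_ne_top _ _)
    have hXv₀ : P {ω | v₀ < X 1 ω} = 0 := measure_mono_null (fun ω hω => hv₀.trans_lt hω) hX1
    rw [hXv₀, ENNReal.toReal_zero]
  filter_upwards [eventually_ge_atTop (u₀ * v₀ ^ (Finset.Icc 1 t).card)] with x hx
  exact measure_lt_mul_prod_eq_zero (fun i ω => (hYpos i ω).le) hu₀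
    ((((hid t).comp measurable_fst).measure_mem_eq measurableSet_Ioi).trans hX1)
    (fun i => (((hid i).comp measurable_snd).measure_mem_eq measurableSet_Ioi).trans hY1) _ hx

end IidPairs

theorem pairwise_joint_tail_negligible_general
    {Ω : Type*} [MeasurableSpace Ω] (P : Measure Ω) [IsProbabilityMeasure P]
    (X Y : ℕ → Ω → ℝ)
    (hX : ∀ i, Measurable (X i)) (hY : ∀ i, Measurable (Y i))
    (hXnn : ∀ i ω, 0 ≤ X i ω) (hYpos : ∀ i ω, 0 < Y i ω)
    (φ₁ φ₂ : ℝ → ℝ) (hφ₁ : Measurable φ₁) (hφ₂ : Measurable φ₂) (θ b₁ b₂ : ℝ)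
    (hb₁ : ∀ x, |φ₁ x| ≤ b₁) (hb₂ : ∀ y, |φ₂ y| ≤ b₂)
    (hmean2 : ∫ ω, φ₂ (Y 1 ω) ∂P = 0)
    -- i.i.d. pairs with generic Sarmanov joint law
    (hiid : ProbabilityTheory.iIndepFun
      (fun i ω => (X i ω, Y i ω)) P)
    (hid : ∀ i, P.map (fun ω => (X i ω, Y i ω)) = P.map (fun ω => (X 1 ω, Y 1 ω)))
    (hjoint : P.map (fun ω => (X 1 ω, Y 1 ω)) =
      ((P.map (X 1)).prod (P.map (Y 1))).withDensity
        (fun p => ENNReal.ofReal (1 + θ * φ₁ p.1 * φ₂ p.2)))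
    -- Ḡ = o(F̄)
    (hGF : (fun x => (P {ω | Y 1 ω > x}).toReal) =o[atTop]
      fun x => (P {ω | X 1 ω > x}).toReal)
    -- ∫ H̃ dG < ∞
    (Htilde : ℝ → ℝ)
    (hHt : ∀ v : ℝ, 0 < v → Htilde v =
      sSup {r : ℝ | ∃ x : ℝ, 0 < x ∧
        r = (P {ω | X 1 ω * Y 1 ω > x / v}).toReal / (P {ω | X 1 ω * Y 1 ω > x}).toReal})
    (hHtBdd : ∀ v : ℝ, 0 < v → BddAbove {r : ℝ | ∃ x : ℝ, 0 < x ∧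
        r = (P {ω | X 1 ω * Y 1 ω > x / v}).toReal / (P {ω | X 1 ω * Y 1 ω > x}).toReal})
    (hHtInt : ∫⁻ v, ENNReal.ofReal (Htilde v) ∂(P.map (Y 1)) < ⊤)
    -- W : bounded regularly varying dominator of the tail of XY
    (W : ℝ → ℝ)
    (hdom : ∀ x > (0:ℝ), (P {ω | X 1 ω * Y 1 ω > x}).toReal ≤ W x) :
    ∀ s t : ℕ, 1 ≤ s → s < t →
      (fun x => (P {ω | X s ω * ∏ i ∈ Finset.Icc 1 s, Y i ω > x ∧
        X t ω * ∏ i ∈ Finset.Icc 1 t, Y i ω > x}).toReal) =o[atTop] W := by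
  intro s t hs hst
  have hpair : ∀ i, Measurable fun ω => (X i ω, Y i ω) := fun i => (hX i).prodMk (hY i)
  have hident : ∀ i, IdentDistrib (fun ω => (X i ω, Y i ω)) (fun ω => (X 1 ω, Y 1 ω)) P P :=
    fun i => ⟨(hpair i).aemeasurable, (hpair 1).aemeasurable, hid i⟩
  by_cases hT : ∀ u, 0 < u → P {ω | X 1 ω * Y 1 ω > u} ≠ 0
  · have hbound := isTailRatioBound_of_eq_sSup (T := fun u => P {ω | u < X 1 ω * Y 1 ω})
      (fun a b hab => measure_mono fun ω hω => hab.trans_lt hω) hT (fun _ => measure_ne_top _ _)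
      hHt hHtBdd
    have hI : ∫⁻ ω, ENNReal.ofReal ((Ioi 0).indicator Htilde (Y 1 ω)) ∂P ≠ ∞ := by
      rw [← lintegral_map hbound.measurable (hY 1)]
      refine ne_of_eq_of_ne (lintegral_congr_ae ?_) hHtInt.ne
      filter_upwards [(ae_map_iff (hY 1).aemeasurable measurableSet_Ioi).2
        (ae_of_all _ (hYpos 1))] with v (hv : v ∈ Ioi 0)
      rw [indicator_of_mem hv]
    refine (isLittleO_joint_tail_of_isTailRatioBound hX hY hXnn hYpos hiid hident hbound hI hs
      hst).trans_isBigO (Asymptotics.IsBigO.of_bound' ?_)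
    filter_upwards [eventually_gt_atTop 0] with x hx
    rw [Real.norm_of_nonneg ENNReal.toReal_nonneg]
    exact (hdom x hx).trans (le_abs_self _)
  · obtain ⟨x₀, hx₀, hnull⟩ : ∃ x₀, 0 < x₀ ∧ P {ω | x₀ < X 1 ω * Y 1 ω} = 0 := by
      simpa using hT
    obtain ⟨u₀, hu₀, hX1⟩ := exists_measure_lt_eq_zero_of_sarmanov (hX 1) (hY 1) (hYpos 1) hφ₁
      hφ₂ hb₁ hb₂ hmean2 hjoint hx₀ hnull
    refine (Asymptotics.isLittleO_zero W atTop).congr' ?_ EventuallyEq.rfl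
    filter_upwards [eventually_measure_lt_mul_prod_eq_zero hYpos hident hGF.isBigO hu₀.le hX1 t]
      with x hx
    rw [measure_mono_null (fun ω hω => hω.2) hx, ENNReal.toReal_zero]

/-- For i.i.d. bivariate Sarmanov vectors, with moment conditions and the tail of the
generic product dominated by a bounded regularly varying function `W` of index `-α`,
the joint tails of the discounted terms are `o(W(x))`. -/
theorem pairwise_joint_tail_negligible
    {Ω : Type*} [MeasurableSpace Ω] (P : Measure Ω) [IsProbabilityMeasure P]
    (X Y : ℕ → Ω → ℝ)
    (hX : ∀ i, Measurable (X i)) (hY : ∀ i, Measurable (Y i))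
    (hXnn : ∀ i ω, 0 ≤ X i ω) (hYpos : ∀ i ω, 0 < Y i ω)
    (φ₁ φ₂ : ℝ → ℝ) (hφ₁ : Measurable φ₁) (hφ₂ : Measurable φ₂) (θ d₁ b₁ b₂ : ℝ)
    (hb₁ : ∀ x, |φ₁ x| ≤ b₁) (hb₂ : ∀ y, |φ₂ y| ≤ b₂)
    (hd₁ : Tendsto φ₁ atTop (nhds d₁))
    (hmean1 : ∫ ω, φ₁ (X 1 ω) ∂P = 0) (hmean2 : ∫ ω, φ₂ (Y 1 ω) ∂P = 0)
    -- i.i.d. pairs with generic Sarmanov joint law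
    (hiid : ProbabilityTheory.iIndepFun
      (fun i ω => (X i ω, Y i ω)) P)
    (hid : ∀ i, P.map (fun ω => (X i ω, Y i ω)) = P.map (fun ω => (X 1 ω, Y 1 ω)))
    (hjoint : P.map (fun ω => (X 1 ω, Y 1 ω)) =
      ((P.map (X 1)).prod (P.map (Y 1))).withDensity
        (fun p => ENNReal.ofReal (1 + θ * φ₁ p.1 * φ₂ p.2)))
    -- F ∈ 𝒟
    (hD : ∀ y : ℝ, 0 < y → y < 1 →
      ∃ C : ℝ, ∀ᶠ x in atTop,
        (P {ω | X 1 ω > x * y}).toReal ≤ C * (P {ω | X 1 ω > x}).toReal)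
    -- Ḡ = o(F̄)
    (hGF : (fun x => (P {ω | Y 1 ω > x}).toReal) =o[atTop]
      fun x => (P {ω | X 1 ω > x}).toReal)
    -- ∫ H̃ dG < ∞
    (Htilde : ℝ → ℝ)
    (hHt : ∀ v : ℝ, 0 < v → Htilde v =
      sSup {r : ℝ | ∃ x : ℝ, 0 < x ∧
        r = (P {ω | X 1 ω * Y 1 ω > x / v}).toReal / (P {ω | X 1 ω * Y 1 ω > x}).toReal})
    (hHtBdd : ∀ v : ℝ, 0 < v → BddAbove {r : ℝ | ∃ x : ℝ, 0 < x ∧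
        r = (P {ω | X 1 ω * Y 1 ω > x / v}).toReal / (P {ω | X 1 ω * Y 1 ω > x}).toReal})
    (hHtInt : ∫⁻ v, ENNReal.ofReal (Htilde v) ∂(P.map (Y 1)) < ⊤)
    -- moment condition
    (α ε : ℝ) (hα : 0 < α) (hε : 0 < ε)
    (hmom : Integrable (fun ω => Y 1 ω ^ (α + ε)) P)
    -- W : bounded regularly varying dominator of the tail of XY
    (W : ℝ → ℝ) (hWpos : ∀ x > (0:ℝ), 0 < W x)
    (hWbdd : ∃ B : ℝ, ∀ x > (0:ℝ), W x ≤ B)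
    (hWRV : ∀ l : ℝ, 0 < l →
      Tendsto (fun x => W (l * x) / W x) atTop (nhds (l ^ (-α))))
    (hdom : ∀ x > (0:ℝ), (P {ω | X 1 ω * Y 1 ω > x}).toReal ≤ W x) :
    ∀ s t : ℕ, 1 ≤ s → s < t →
      (fun x => (P {ω | X s ω * ∏ i ∈ Finset.Icc 1 s, Y i ω > x ∧
        X t ω * ∏ i ∈ Finset.Icc 1 t, Y i ω > x}).toReal) =o[atTop] W :=
  pairwise_joint_tail_negligible_general P X Y hX hY hXnn hYpos φ₁ φ₂ hφ₁ hφ₂ θ b₁ b₂ hb₁ hb₂ hmean2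
    hiid hid hjoint hGF Htilde hHt hHtBdd hHtInt W hdom
end

section
/- Let φ₁ be a bounded measurable function on (0,∞) taking both positive and negative values, and let μ^{(1)} be a probability measure on (1,∞). Then there exists a probability measure μ on (0,∞) such that ∫φ₁ dμ = 0 and μ agrees with a positive constant multiple of μ^{(1)} on a neighborhood of infinity (i.e., there exist x* and κ > 0 with μ((x,∞)) = κ·μ^{(1)}((x,∞)) for all x > x*). -/
open MeasureTheory Set Filter

/-- Given a bounded measurable kernel `φ₁` taking both signs and a probability
measure `μ⁽¹⁾` on `(1,∞)`, there is a probability measure `μ` on `(0,∞)` with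
`∫ φ₁ dμ = 0` whose tail agrees with a positive constant multiple of the tail of
`μ⁽¹⁾` in a neighborhood of infinity. -/
theorem exists_centered_measure_same_tail
    (φ₁ : ℝ → ℝ) (hφ₁meas : Measurable φ₁)
    (hφ₁bdd : ∃ b : ℝ, ∀ x, |φ₁ x| ≤ b)
    (hpos : ∃ x : ℝ, 0 < x ∧ 0 < φ₁ x)
    (hneg : ∃ x : ℝ, 0 < x ∧ φ₁ x < 0)
    (μ₁ : Measure ℝ) [IsProbabilityMeasure μ₁] (hμ₁ : μ₁ (Set.Ioi (1:ℝ)) = 1) :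
    ∃ μ : Measure ℝ, IsProbabilityMeasure μ ∧ μ (Set.Iic (0:ℝ)) = 0 ∧
      (∫ x, φ₁ x ∂μ) = 0 ∧
      ∃ xs κ : ℝ, 0 < κ ∧
        ∀ x : ℝ, xs < x → μ (Set.Ioi x) = ENNReal.ofReal κ * μ₁ (Set.Ioi x) := by
  obtain ⟨B, hB⟩ := hφ₁bdd
  obtain ⟨p, hp0, hpφ⟩ := hpos
  obtain ⟨n, hn0, hnφ⟩ := hneg
  have hB0 : 0 ≤ B := le_trans (abs_nonneg _) (hB 0)
  set c : ℝ := φ₁ p with hc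
  set c' : ℝ := -φ₁ n with hc'
  have hcpos : 0 < c := hpφ
  have hc'pos : 0 < c' := by simp [hc']; linarith
  set D : ℝ := c + c' with hD
  have hDpos : 0 < D := by positivity
  set I : ℝ := ∫ x, φ₁ x ∂μ₁ with hI
  have hint : Integrable φ₁ μ₁ :=
    (integrable_const B).mono' hφ₁meas.aestronglyMeasurable
      (ae_of_all _ fun x => by simpa using hB x)
  have hIB : |I| ≤ B := by
    have := norm_integral_le_of_norm_le_const (μ := μ₁) (f := φ₁) (C := B)
      (ae_of_all _ fun x => by simpa using hB x)
    simpa [hI] using this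
  have hcB : c ≤ B := le_trans (le_abs_self _) (hB p)
  have hc'B : c' ≤ B := le_trans (by simp [hc']; exact neg_le_abs _) (hB n)
  set κ : ℝ := min c c' / (2 * (B + D + 1)) with hκ
  have hκpos : 0 < κ := by
    apply div_pos (lt_min hcpos hc'pos); positivity
  have hmin : min c c' ≤ B := le_trans (min_le_left _ _) hcB
  have hκhalf : κ ≤ 1 / 2 := by
    rw [hκ, div_le_div_iff₀ (by positivity) (by norm_num)]
    nlinarith [hDpos]
  have hκB : κ * B < min c c' / 2 := by
    rw [hκ]
    have hmin0 : 0 < min c c' := lt_min hcpos hc'pos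
    rw [div_mul_eq_mul_div, div_lt_div_iff₀ (by positivity) (by norm_num)]
    nlinarith [hDpos]
  have hκI : |κ * I| < min c c' / 2 := by
    calc |κ * I| = κ * |I| := by rw [abs_mul, abs_of_pos hκpos]
    _ ≤ κ * B := by nlinarith
    _ < _ := hκB
  have hκI' : -(min c c' / 2) < κ * I ∧ κ * I < min c c' / 2 := abs_lt.mp hκI
  set a : ℝ := ((1 - κ) * c' - κ * I) / D with ha
  set b : ℝ := ((1 - κ) * c + κ * I) / D with hb
  have hmc : min c c' ≤ c := min_le_left _ _
  have hmc' : min c c' ≤ c' := min_le_right _ _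
  have hapos : 0 < a := by
    apply div_pos _ hDpos
    nlinarith [hκI'.2]
  have hbpos : 0 < b := by
    apply div_pos _ hDpos
    nlinarith [hκI'.1]
  have hsum : κ + a + b = 1 := by
    rw [ha, hb]; field_simp; ring
  have hbal : κ * I + a * c + b * φ₁ n = 0 := by
    have : φ₁ n = -c' := by simp [hc']
    rw [this, ha, hb]; field_simp; ring
  set μ : Measure ℝ := ENNReal.ofReal κ • μ₁ + ENNReal.ofReal a • Measure.dirac p
      + ENNReal.ofReal b • Measure.dirac n with hμ
  have hμs : ∀ s : Set ℝ, μ s = ENNReal.ofReal κ * μ₁ s + ENNReal.ofReal a * Measure.dirac p s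
      + ENNReal.ofReal b * Measure.dirac n s := by
    intro s; simp [hμ]
  have hμuniv : μ univ = 1 := by
    rw [hμs, measure_univ, measure_univ, measure_univ, mul_one, mul_one, mul_one,
      ← ENNReal.ofReal_add hκpos.le hapos.le, ← ENNReal.ofReal_add (by positivity) hbpos.le,
      hsum, ENNReal.ofReal_one]
  have hprob : IsProbabilityMeasure μ := ⟨hμuniv⟩
  refine ⟨μ, hprob, ?_, ?_, max p n, κ, hκpos, ?_⟩
  · -- μ (Iic 0) = 0
    have h1 : μ₁ (Set.Iic (0:ℝ)) = 0 := by
      have hcompl : μ₁ (Set.Ioi (1:ℝ))ᶜ = 0 := by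
        rw [measure_compl measurableSet_Ioi (measure_ne_top _ _), measure_univ, hμ₁, tsub_self]
      exact measure_mono_null (fun x hx => by simp at hx ⊢; linarith) hcompl
    rw [hμs, h1, mul_zero, Measure.dirac_apply' _ measurableSet_Iic,
      Measure.dirac_apply' _ measurableSet_Iic,
      Set.indicator_of_notMem (by simp; linarith),
      Set.indicator_of_notMem (by simp; linarith)]
    simp
  · -- integral
    have hintμ : Integrable φ₁ μ := by
      haveI := hprob
      exact (integrable_const B).mono' hφ₁meas.aestronglyMeasurable
        (ae_of_all _ fun x => by simpa using hB x)
    rw [hμ] at hintμ ⊢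
    rw [integrable_add_measure] at hintμ
    obtain ⟨h12, h3⟩ := hintμ
    rw [integrable_add_measure] at h12
    obtain ⟨h1, h2⟩ := h12
    rw [integral_add_measure (h1.add_measure h2) h3, integral_add_measure h1 h2,
      integral_smul_measure, integral_smul_measure, integral_smul_measure,
      integral_dirac, integral_dirac,
      ENNReal.toReal_ofReal hκpos.le, ENNReal.toReal_ofReal hapos.le,
      ENNReal.toReal_ofReal hbpos.le]
    simpa [hI, hc] using hbal
  · -- tail
    intro x hx
    have hpx : p ∉ Set.Ioi x := by simp; exact le_trans (le_max_left p n) hx.le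
    have hnx : n ∉ Set.Ioi x := by simp; exact le_trans (le_max_right p n) hx.le
    rw [hμs, Measure.dirac_apply' _ measurableSet_Ioi, Measure.dirac_apply' _ measurableSet_Ioi,
      Set.indicator_of_notMem hpx, Set.indicator_of_notMem hnx]
    simp
end
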